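/- Under the dual error setting with coercivity constant α_A, for each m ∈ {0, …, N−1} one has (εᵐ)ᵀ M εᵐ − (εᵐ⁺¹)ᵀ M εᵐ⁺¹ + Δt·(εᵐ)ᵀ Aᵀ εᵐ ≤ (Δt/α_A)·‖ϱᵐ‖₋₁². -/

import Mathlib

open Matrix BigOperators Finset

/-- The energy norm `‖v‖_{G*} = √(vᵀ G* v)` induced by a matrix `G`. -/
noncomputable def normG {d : ℕ} (G : Matrix (Fin d) (Fin d) ℝ) (v : Fin d → ℝ) : ℝ :=
  Real.sqrt (v ⬝ᵥ G.mulVec v)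

/-- The dual norm `‖r‖₋₁ = sup_{v ≠ 0} (rᵀ v)/‖v‖_{G*}`. -/
noncomputable def dualNorm {d : ℕ} (G : Matrix (Fin d) (Fin d) ℝ) (r : Fin d → ℝ) : ℝ :=
  ⨆ v : {v : Fin d → ℝ // v ≠ 0}, (r ⬝ᵥ (v : Fin d → ℝ)) / normG G (v : Fin d → ℝ)

/-- The symmetric part `(A + Aᵀ)/2` of a matrix. -/
noncomputable def symPart {d : ℕ} (A : Matrix (Fin d) (Fin d) ℝ) : Matrix (Fin d) (Fin d) ℝ :=
  ((1 : ℝ)/2) • (A + Aᵀ)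

/-! Testing the step relation against `εᵐ` gives
`(εᵐ)ᵀMεᵐ + Δt (εᵐ)ᵀAᵀεᵐ = (εᵐ)ᵀMεᵐ⁺¹ − Δt (εᵐ)ᵀϱᵐ`. The cross term is at most half of
`(εᵐ)ᵀMεᵐ + (εᵐ⁺¹)ᵀMεᵐ⁺¹`, the load term is at most `‖ϱᵐ‖₋₁ ‖εᵐ‖_{G*}` by duality, and
Young's inequality `2ab ≤ α_A a² + b²/α_A` together with coercivity absorbs the latter into the
`Aᵀ`-term. -/

namespace Matrix

variable {d : ℕ}

lemma dotProduct_transpose_mulVec_self {R : Type*} [CommSemiring R] {n : Type*} [Fintype n]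
    (A : Matrix n n R) (v : n → R) : v ⬝ᵥ Aᵀ *ᵥ v = v ⬝ᵥ A *ᵥ v := by
  rw [mulVec_transpose, dotProduct_mulVec, dotProduct_comm]

lemma IsSymm.dotProduct_mulVec_comm {R : Type*} [CommSemiring R] {n : Type*} [Fintype n]
    {A : Matrix n n R} (hA : A.IsSymm) (u v : n → R) : u ⬝ᵥ A *ᵥ v = v ⬝ᵥ A *ᵥ u := by
  rw [dotProduct_mulVec, dotProduct_comm, ← mulVec_transpose, hA.eq]

lemma PosSemidef.two_mul_dotProduct_mulVec_le {n : Type*} [Fintype n] {M : Matrix n n ℝ}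
    (hM : M.PosSemidef) (u v : n → ℝ) :
    2 * (u ⬝ᵥ M *ᵥ v) ≤ u ⬝ᵥ M *ᵥ u + v ⬝ᵥ M *ᵥ v := by
  have hdiff : 0 ≤ (u - v) ⬝ᵥ M *ᵥ (u - v) := by
    simpa using hM.dotProduct_mulVec_nonneg (u - v)
  have hsymm := (isHermitian_iff_isSymm.mp hM.isHermitian).dotProduct_mulVec_comm u v
  simp only [mulVec_sub, dotProduct_sub, sub_dotProduct] at hdiff
  linarith

lemma dotProduct_symPart_mulVec_self (A : Matrix (Fin d) (Fin d) ℝ) (v : Fin d → ℝ) :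
    v ⬝ᵥ symPart A *ᵥ v = v ⬝ᵥ Aᵀ *ᵥ v := by
  rw [symPart, smul_mulVec, add_mulVec, dotProduct_smul, dotProduct_add,
    dotProduct_transpose_mulVec_self, smul_eq_mul]
  ring

lemma normG_neg (G : Matrix (Fin d) (Fin d) ℝ) (v : Fin d → ℝ) : normG G (-v) = normG G v := by
  simp only [normG, mulVec_neg, dotProduct_neg, neg_dotProduct, neg_neg]

lemma PosSemidef.dotProduct_mulVec_le_normG_mul {G : Matrix (Fin d) (Fin d) ℝ}
    (hG : G.PosSemidef) (u v : Fin d → ℝ) : u ⬝ᵥ G *ᵥ v ≤ normG G u * normG G v := by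
  let _ := G.toSeminormedAddCommGroup hG
  let _ := G.toInnerProductSpace hG
  have hinner : ∀ x y : Fin d → ℝ, (inner ℝ x y : ℝ) = x ⬝ᵥ G *ᵥ y := fun x y =>
    dotProduct_comm _ _
  -- `Fin d → ℝ` already carries the sup norm, so the norm induced by `G` is named explicitly.
  have hnorm : ∀ x : Fin d → ℝ,
      @norm _ (G.toSeminormedAddCommGroup hG).toNorm x = normG G x := fun x => by
    rw [norm_eq_sqrt_real_inner, hinner, normG]
  simpa only [hinner, hnorm] using real_inner_le_norm u v

lemma PosDef.normG_pos {G : Matrix (Fin d) (Fin d) ℝ} (hG : G.PosDef) {v : Fin d → ℝ}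
    (hv : v ≠ 0) : 0 < normG G v :=
  Real.sqrt_pos.mpr (by simpa using hG.dotProduct_mulVec_pos hv)

lemma PosDef.exists_dotProduct_le_mul_normG {G : Matrix (Fin d) (Fin d) ℝ} (hG : G.PosDef)
    (r : Fin d → ℝ) : ∃ C, ∀ v, r ⬝ᵥ v ≤ C * normG G v := by
  obtain ⟨w, rfl⟩ := mulVec_surjective_iff_isUnit.mpr hG.isUnit r
  refine ⟨normG G w, fun v => ?_⟩
  rw [dotProduct_comm, (isHermitian_iff_isSymm.mp hG.isHermitian).dotProduct_mulVec_comm]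
  exact hG.posSemidef.dotProduct_mulVec_le_normG_mul w v

lemma PosDef.dotProduct_le_dualNorm_mul_normG {G : Matrix (Fin d) (Fin d) ℝ} (hG : G.PosDef)
    (r v : Fin d → ℝ) : r ⬝ᵥ v ≤ dualNorm G r * normG G v := by
  rcases eq_or_ne v 0 with rfl | hv
  · simp [normG]
  obtain ⟨C, hC⟩ := hG.exists_dotProduct_le_mul_normG r
  have hbdd : BddAbove (Set.range fun v : {v : Fin d → ℝ // v ≠ 0} =>
      r ⬝ᵥ (v : Fin d → ℝ) / normG G v) := by
    refine ⟨C, ?_⟩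
    rintro _ ⟨⟨u, hu⟩, rfl⟩
    exact (div_le_iff₀ (hG.normG_pos hu)).mpr (hC u)
  exact (div_le_iff₀ (hG.normG_pos hv)).mp (le_ciSup hbdd ⟨v, hv⟩)

end Matrix

theorem stmt8_general {d : ℕ}
    (G M A : Matrix (Fin d) (Fin d) ℝ) (hG : G.PosDef) (hM : M.PosSemidef)
    (Δt : ℝ) (hΔt : 0 < Δt) (N : ℕ)
    (αA : ℝ) (hαA : 0 < αA)
    (hcoA : ∀ v : Fin d → ℝ, αA * (normG G v)^2 ≤ v ⬝ᵥ (symPart A).mulVec v)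
    (ε ϱ : ℕ → Fin d → ℝ)
    (hstep : ∀ k, k < N →
      (M + Δt • Aᵀ).mulVec (ε k) = M.mulVec (ε (k + 1)) - Δt • ϱ k)
    (m : ℕ) (hm : m < N) :
    ε m ⬝ᵥ M.mulVec (ε m) - ε (m + 1) ⬝ᵥ M.mulVec (ε (m + 1)) +
        Δt * (ε m ⬝ᵥ Aᵀ.mulVec (ε m)) ≤
      (Δt / αA) * (dualNorm G (ϱ m))^2 := by
  set e := ε m
  set a := normG G e
  set b := dualNorm G (ϱ m)
  have htested : e ⬝ᵥ M *ᵥ e + Δt * (e ⬝ᵥ Aᵀ *ᵥ e) =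
      e ⬝ᵥ M *ᵥ ε (m + 1) - Δt * (e ⬝ᵥ ϱ m) := by
    simpa only [add_mulVec, smul_mulVec, dotProduct_add, dotProduct_sub, dotProduct_smul,
      smul_eq_mul] using congrArg (e ⬝ᵥ ·) (hstep m hm)
  have hcross := hM.two_mul_dotProduct_mulVec_le e (ε (m + 1))
  have hcoercive : αA * a ^ 2 ≤ e ⬝ᵥ Aᵀ *ᵥ e := dotProduct_symPart_mulVec_self A e ▸ hcoA e
  have hload : -(e ⬝ᵥ ϱ m) ≤ b * a := by
    simpa only [dotProduct_neg, dotProduct_comm, normG_neg] using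
      hG.dotProduct_le_dualNorm_mul_normG (ϱ m) (-e)
  have hyoung : 2 * (b * a) ≤ αA * a ^ 2 + b ^ 2 / αA := by
    have : 0 ≤ (b - αA * a) ^ 2 / αA := by positivity
    field_simp at this ⊢
    linarith
  have hrescale : Δt * (b ^ 2 / αA) = Δt / αA * b ^ 2 := by ring
  linarith [mul_le_mul_of_nonneg_left hyoung hΔt.le, mul_le_mul_of_nonneg_left hcoercive hΔt.le,
    mul_le_mul_of_nonneg_left hload hΔt.le]

theorem stmt8 {d : ℕ} (hd : 1 ≤ d)
    (G M A : Matrix (Fin d) (Fin d) ℝ) (hG : G.PosDef) (hM : M.PosSemidef)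
    (Δt : ℝ) (hΔt : 0 < Δt) (N : ℕ) (hN : 1 ≤ N)
    (αA : ℝ) (hαA : 0 < αA)
    (hcoA : ∀ v : Fin d → ℝ, αA * (normG G v)^2 ≤ v ⬝ᵥ (symPart A).mulVec v)
    (ε ϱ : ℕ → Fin d → ℝ) (hεN : ε N = 0)
    (hstep : ∀ k, k < N →
      (M + Δt • Aᵀ).mulVec (ε k) = M.mulVec (ε (k + 1)) - Δt • ϱ k)
    (m : ℕ) (hm : m < N) :
    ε m ⬝ᵥ M.mulVec (ε m) - ε (m + 1) ⬝ᵥ M.mulVec (ε (m + 1)) +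
        Δt * (ε m ⬝ᵥ Aᵀ.mulVec (ε m)) ≤
      (Δt / αA) * (dualNorm G (ϱ m))^2 :=
  stmt8_general G M A hG hM Δt hΔt N αA hαA hcoA ε ϱ hstep m hm
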